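/- Let G be a finite connected simple graph with edge-weight function w : E(G) → ℝ that is injective on the edge set, let T be the unique minimum spanning tree of G, and let S and D be two distinct vertices. Then the minimax value from S to D in G, namely the minimum over all S–D paths in G of the maximum edge weight on the path, equals the maximum edge weight on the unique S–D path in T. -/

import Mathlib

/-! Exchange argument: if an edge `e` of the `S`–`D` path in the minimum spanning tree `T`
were heavier than every edge of some `S`–`D` path `p` in `G`, then, since removing `e` separates
`S` from `D` in `T`, some edge `f` of `p` joins the two components of `T - e`, and `T - e + f`
would be a lighter spanning tree. So every edge of the tree path is at most the maximum of any
`S`–`D` path, and the tree path itself is one of these paths. -/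

open SimpleGraph

/-- `T` is a spanning tree of `G`: a spanning subgraph (same vertex set, edges of `G`)
that is a tree (connected and acyclic). -/
def IsSpanningTree {V : Type*} (G T : SimpleGraph V) : Prop :=
  T ≤ G ∧ T.IsTree

/-- Total edge weight of a graph (sum of `w` over its edge set). -/
noncomputable def totalWeight {V : Type*} [Fintype V] (w : Sym2 V → ℝ)
    (T : SimpleGraph V) : ℝ :=
  ∑ e ∈ T.edgeSet.toFinite.toFinset, w e

namespace SimpleGraph

variable {V : Type*}

lemma Walk.reachable_deleteEdges_or {G : SimpleGraph V} {x u : V} (p : G.Walk x u) (v : V) :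
    (G.deleteEdges {s(u, v)}).Reachable x u ∨ (G.deleteEdges {s(u, v)}).Reachable x v := by
  induction p with
  | nil => exact Or.inl .rfl
  | @cons x y u hxy q ih =>
    by_cases he : s(x, y) = s(u, v)
    · rcases Sym2.mem_iff.mp (he ▸ Sym2.mem_mk_left x y) with rfl | rfl
      · exact Or.inl .rfl
      · exact Or.inr .rfl
    · have hxy' : (G.deleteEdges {s(u, v)}).Adj x y := (deleteEdges_adj ..).mpr ⟨hxy, he⟩
      exact ih.imp hxy'.reachable.trans hxy'.reachable.trans

lemma Preconnected.reachable_deleteEdges_or {G : SimpleGraph V} (hG : G.Preconnected)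
    (u v x : V) :
    (G.deleteEdges {s(u, v)}).Reachable u x ∨ (G.deleteEdges {s(u, v)}).Reachable v x :=
  ((hG x u).some.reachable_deleteEdges_or v).imp .symm .symm

lemma Preconnected.preconnected_deleteEdges_sup_edge {G : SimpleGraph V} (hG : G.Preconnected)
    {u v a b : V} (hab : ¬(G.deleteEdges {s(u, v)}).Reachable a b) :
    (G.deleteEdges {s(u, v)} ⊔ edge a b).Preconnected := by
  set H := G.deleteEdges {s(u, v)}
  have hle : H ≤ H ⊔ edge a b := le_sup_left
  have hne : a ≠ b := fun h => hab (h ▸ .rfl)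
  have hab' : (H ⊔ edge a b).Reachable a b :=
    Adj.reachable <| (sup_adj ..).mpr <| Or.inr <| (edge_adj ..).mpr ⟨Or.inl ⟨rfl, rfl⟩, hne⟩
  have huv : (H ⊔ edge a b).Reachable u v := by
    rcases hG.reachable_deleteEdges_or u v a with ha | ha <;>
      rcases hG.reachable_deleteEdges_or u v b with hb | hb
    · exact absurd (ha.symm.trans hb) hab
    · exact ((ha.mono hle).trans hab').trans (hb.symm.mono hle)
    · exact ((hb.mono hle).trans hab'.symm).trans (ha.symm.mono hle)
    · exact absurd (ha.symm.trans hb) hab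
  have hu : ∀ x, (H ⊔ edge a b).Reachable u x := fun x =>
    (hG.reachable_deleteEdges_or u v x).elim (·.mono hle) (huv.trans <| ·.mono hle)
  exact fun x y => (hu x).symm.trans (hu y)

lemma IsTree.deleteEdges_sup_edge {T : SimpleGraph V} (hT : T.IsTree) {u v a b : V}
    (hab : ¬(T.deleteEdges {s(u, v)}).Reachable a b) :
    (T.deleteEdges {s(u, v)} ⊔ edge a b).IsTree where
  connected := have := hT.connected.nonempty
    ⟨hT.connected.preconnected.preconnected_deleteEdges_sup_edge hab⟩
  isAcyclic := (hT.isAcyclic.anti (T.deleteEdges_le _)).sup_edge_of_not_reachable hab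

lemma IsAcyclic.not_reachable_deleteEdges_of_mem_edges {T : SimpleGraph V} (hT : T.IsAcyclic)
    {x y : V} {p : T.Walk x y} (hp : p.IsPath) {e : Sym2 V} (he : e ∈ p.edges) :
    ¬(T.deleteEdges {e}).Reachable x y := by
  classical
  rintro ⟨q⟩
  have hpq : p = q.bypass.mapLe (T.deleteEdges_le _) :=
    congrArg Subtype.val <| (hT.subsingleton_path x y).elim ⟨p, hp⟩ ⟨_, q.bypass_isPath.mapLe _⟩
  rw [hpq, Walk.edges_mapLe_eq_edges] at he
  simpa using q.bypass.edges_subset_edgeSet he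

lemma Walk.exists_mem_edges_not_reachable {G H : SimpleGraph V} {x y : V} (p : G.Walk x y)
    (hxy : ¬H.Reachable x y) : ∃ a b, s(a, b) ∈ p.edges ∧ ¬H.Reachable a b := by
  obtain ⟨d, hd, hxa, hxb⟩ := p.exists_boundary_dart {z | H.Reachable x z} .rfl hxy
  exact ⟨d.fst, d.snd, List.mem_map_of_mem hd, fun hab => hxb (hxa.trans hab)⟩

end SimpleGraph

lemma totalWeight_deleteEdges_sup_edge {V : Type*} [Fintype V] (w : Sym2 V → ℝ)
    {T : SimpleGraph V} {e : Sym2 V} (he : e ∈ T.edgeSet) {a b : V} (hab : a ≠ b)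
    (hf : s(a, b) ∉ T.edgeSet) :
    totalWeight w (T.deleteEdges {e} ⊔ edge a b) = totalWeight w T - w e + w s(a, b) := by
  classical
  have hedges : (T.deleteEdges {e} ⊔ edge a b).edgeSet.toFinite.toFinset
      = insert s(a, b) (T.edgeSet.toFinite.toFinset.erase e) := by
    ext f
    simp [edgeSet_edge_of_ne hab, and_comm]
  have hfe : s(a, b) ∉ T.edgeSet.toFinite.toFinset.erase e := by simp [hf]
  rw [totalWeight, hedges, Finset.sum_insert hfe,
    Finset.sum_erase_eq_sub ((Set.Finite.mem_toFinset _).mpr he), totalWeight]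
  ring

/-- The cut property of minimum spanning trees. -/
theorem IsSpanningTree.weight_le_of_not_reachable_deleteEdges {V : Type*} [Fintype V]
    {G T : SimpleGraph V} (hT : IsSpanningTree G T) {w : Sym2 V → ℝ}
    (hmin : ∀ T', IsSpanningTree G T' → totalWeight w T ≤ totalWeight w T')
    {e : Sym2 V} (he : e ∈ T.edgeSet) {a b : V} (hab : G.Adj a b)
    (hcut : ¬(T.deleteEdges {e}).Reachable a b) : w e ≤ w s(a, b) := by
  by_cases hfe : s(a, b) = e
  · rw [hfe]
  have hf : s(a, b) ∉ T.edgeSet := fun hf => hcut ((deleteEdges_adj ..).mpr ⟨hf, hfe⟩).reachable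
  induction e with
  | h u v =>
    have hT' : IsSpanningTree G (T.deleteEdges {s(u, v)} ⊔ edge a b) :=
      ⟨sup_le ((T.deleteEdges_le _).trans hT.1) ((edge_le_iff (G := G)).mpr (Or.inr hab)),
        hT.2.deleteEdges_sup_edge hcut⟩
    have := hmin _ hT'
    rw [totalWeight_deleteEdges_sup_edge w he hab.ne hf] at this
    linarith

theorem minimax_value_eq_mst_path_max_general {V : Type*} [Fintype V]
    (G : SimpleGraph V)
    (w : Sym2 V → ℝ)
    (T : SimpleGraph V) (hT : IsSpanningTree G T)
    (hmin : ∀ T', IsSpanningTree G T' → totalWeight w T ≤ totalWeight w T')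
    (S D : V)
    (pT : T.Walk S D) (hpT : pT.IsPath) :
    IsLeast {m : WithBot ℝ | ∃ p : G.Walk S D, p.IsPath ∧ (p.edges.map w).maximum = m}
      ((pT.edges.map w).maximum) := by
  refine ⟨⟨pT.mapLe hT.1, hpT.mapLe hT.1, by rw [Walk.edges_mapLe_eq_edges]⟩, ?_⟩
  rintro m ⟨p, -, rfl⟩
  refine List.maximum_le_of_forall_le fun x hx => ?_
  obtain ⟨e, he, rfl⟩ := List.mem_map.mp hx
  obtain ⟨a, b, hab, hcut⟩ :=
    p.exists_mem_edges_not_reachable (hT.2.isAcyclic.not_reachable_deleteEdges_of_mem_edges hpT he)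
  calc (w e : WithBot ℝ)
      ≤ w s(a, b) := WithBot.coe_le_coe.mpr <| hT.weight_le_of_not_reachable_deleteEdges hmin
        (pT.edges_subset_edgeSet he) (p.adj_of_mem_edges hab) hcut
    _ ≤ _ := List.le_maximum_of_mem' (List.mem_map_of_mem hab)

/-- In a finite connected graph with distinct edge weights, with `T` the (unique)
minimum spanning tree and `S ≠ D` two vertices, the minimax value from `S` to `D`
(the minimum over all `S`–`D` paths in `G` of the maximum edge weight on the
path) equals the maximum edge weight on the unique `S`–`D` path in `T`. -/
theorem minimax_value_eq_mst_path_max {V : Type*} [Fintype V]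
    (G : SimpleGraph V) (hG : G.Connected)
    (w : Sym2 V → ℝ) (hw : Set.InjOn w G.edgeSet)
    (T : SimpleGraph V) (hT : IsSpanningTree G T)
    (hmin : ∀ T', IsSpanningTree G T' → totalWeight w T ≤ totalWeight w T')
    (S D : V) (hSD : S ≠ D)
    (pT : T.Walk S D) (hpT : pT.IsPath) :
    IsLeast {m : WithBot ℝ | ∃ p : G.Walk S D, p.IsPath ∧ (p.edges.map w).maximum = m}
      ((pT.edges.map w).maximum) :=
  minimax_value_eq_mst_path_max_general G w T hT hmin S D pT hpT
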